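/- (Expectation of the MRDR imputation loss.) The MRDR imputation loss L_MRDR = Σ_{d∈D} o_d (ê_d − e_d)² (1 − p̂_d) / p̂_d² satisfies E[L_MRDR] = Σ_{d∈D} p_d (1 − p̂_d) (ê_d − e_d)² / p̂_d². In particular, if additionally the family (o_d)_{d∈D} is independent and p̂_d = p_d for all d ∈ D, then E[L_MRDR] = |D|² · Var[L_DR]. -/

import Mathlib

open MeasureTheory ProbabilityTheory Finset Real

lemma variance_const_add' {Ω : Type*} [MeasurableSpace Ω] {P : Measure Ω}
    [IsProbabilityMeasure P] (c : ℝ) {X : Ω → ℝ} (hX : MemLp X 2 P) :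
    variance (fun ω => c + X ω) P = variance X P := by
  have hXi : Integrable X P := hX.integrable one_le_two
  have hX2 : Integrable (fun ω => X ω ^ 2) P := hX.integrable_sq
  have hcX : MemLp (fun ω => c + X ω) 2 P := (memLp_const c).add hX
  rw [variance_eq_sub hcX, variance_eq_sub hX]
  have h1 : ((fun ω => c + X ω) ^ 2) = fun ω => c ^ 2 + (2 * c * X ω + X ω ^ 2) := by
    funext ω; simp [Pi.pow_apply]; ring
  have h2 : (X ^ 2) = fun ω => X ω ^ 2 := by funext ω; simp [Pi.pow_apply]
  simp only [h1, h2]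
  have hA : Integrable (fun ω => 2 * c * X ω + X ω ^ 2) P := (hXi.const_mul _).add hX2
  have hB : Integrable (fun ω => (2 * c) * X ω) P := hXi.const_mul _
  have hC : Integrable (fun _ : Ω => c) P := integrable_const _
  rw [integral_add (integrable_const _) hA, integral_add hB hX2, integral_const_mul,
    integral_const, integral_add hC hXi, integral_const]
  simp [measure_univ]
  ring

/-- Expectation of the MRDR imputation loss: The MRDR imputation loss
`L_MRDR = Σ_{d∈D} o_d (ê_d − e_d)² (1 − p̂_d) / p̂_d²` satisfies
`E[L_MRDR] = Σ_{d∈D} p_d (1 − p̂_d) (ê_d − e_d)² / p̂_d²`. In particular, if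
additionally the family `(o_d)` is independent and `p̂_d = p_d` for all `d`, then
`E[L_MRDR] = |D|² · Var[L_DR]`. -/
theorem expectation_MRDR_imputation_loss
    {Ω : Type*} [MeasurableSpace Ω] (P : Measure Ω) [IsProbabilityMeasure P]
    {ι : Type*} [Fintype ι] [Nonempty ι]
    (p phat e ehat : ι → ℝ) (o : ι → Ω → ℝ)
    (hp : ∀ d, p d ∈ Set.Icc (0 : ℝ) 1)
    (hphat : ∀ d, phat d ∈ Set.Ioc (0 : ℝ) 1)
    (ho01 : ∀ d ω, o d ω = 0 ∨ o d ω = 1)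
    (homeas : ∀ d, Measurable (o d))
    (hoE : ∀ d, ∫ ω, o d ω ∂P = p d) :
    (∫ ω, ∑ d, o d ω * (ehat d - e d) ^ 2 * (1 - phat d) / (phat d) ^ 2 ∂P
        = ∑ d, p d * (1 - phat d) * (ehat d - e d) ^ 2 / (phat d) ^ 2)
    ∧ (iIndepFun o P → (∀ d, phat d = p d) →
        ∫ ω, ∑ d, o d ω * (ehat d - e d) ^ 2 * (1 - phat d) / (phat d) ^ 2 ∂P
          = (Fintype.card ι : ℝ) ^ 2 *
            variance
              (fun ω => (1 / (Fintype.card ι : ℝ)) *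
                ∑ d, (ehat d + o d ω * (e d - ehat d) / phat d)) P) := by
  have homem : ∀ d, MemLp (o d) 2 P := fun d =>
    memLp_of_bounded (a := 0) (b := 1)
      (ae_of_all _ fun ω => by rcases ho01 d ω with h | h <;> simp [h])
      (homeas d).aestronglyMeasurable 2
  have ho_int : ∀ d, Integrable (o d) P := fun d => (homem d).integrable one_le_two
  have key : ∫ ω, ∑ d, o d ω * (ehat d - e d) ^ 2 * (1 - phat d) / (phat d) ^ 2 ∂P
      = ∑ d, p d * (1 - phat d) * (ehat d - e d) ^ 2 / (phat d) ^ 2 := by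
    have hrw : ∀ ω : Ω, (∑ d, o d ω * (ehat d - e d) ^ 2 * (1 - phat d) / (phat d) ^ 2)
        = ∑ d, o d ω * ((ehat d - e d) ^ 2 * (1 - phat d) / (phat d) ^ 2) :=
      fun ω => Finset.sum_congr rfl fun d _ => by ring
    simp_rw [hrw]
    rw [integral_finset_sum _ (fun d _ => (ho_int d).mul_const _)]
    simp_rw [integral_mul_const, hoE]
    exact Finset.sum_congr rfl fun d _ => by ring
  refine ⟨key, fun hind hpe => ?_⟩
  set n : ℝ := (Fintype.card ι : ℝ) with hn
  have hn0 : n ≠ 0 := by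
    simp [hn, Fintype.card_ne_zero]
  set X : ι → Ω → ℝ := fun d ω => ehat d + o d ω * (e d - ehat d) / phat d with hX
  have hXeq : ∀ d, X d = fun ω => ehat d + ((e d - ehat d) / phat d) * o d ω := by
    intro d; funext ω; simp [hX]; ring
  have hXmem : ∀ d, MemLp (X d) 2 P := by
    intro d
    rw [hXeq d]
    exact (memLp_const (ehat d)).add ((homem d).const_mul ((e d - ehat d) / phat d))
  have hXindep : iIndepFun X P := by
    have := hind.comp (fun d (x : ℝ) => ehat d + x * (e d - ehat d) / phat d)
      (fun d => by measurability)
    exact this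
  have hvarX : ∀ d, variance (X d) P
      = ((e d - ehat d) / phat d) ^ 2 * (p d - p d ^ 2) := by
    intro d
    have hvo : variance (o d) P = p d - p d ^ 2 := by
      rw [variance_eq_sub (homem d)]
      have : (o d) ^ 2 = o d := by
        funext ω; rcases ho01 d ω with h | h <;> simp [Pi.pow_apply, h]
      rw [this, hoE]
    rw [hXeq d, variance_const_add' _ ((homem d).const_mul _), variance_const_mul, hvo]
  have hsum : variance (fun ω => ∑ d, X d ω) P = ∑ d, variance (X d) P := by
    have := IndepFun.variance_sum (μ := P) (X := X) (s := Finset.univ)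
      (fun d _ => hXmem d)
      (fun i _ j _ hij => hXindep.indepFun hij)
    rw [← this]
    congr 1
    funext ω
    simp [Finset.sum_apply]
  have hvarL : variance (fun ω => (1 / n) * ∑ d, X d ω) P
      = (1 / n) ^ 2 * ∑ d, variance (X d) P := by
    rw [variance_const_mul, hsum]
  rw [key]
  show _ = n ^ 2 * variance (fun ω => (1 / n) * ∑ d, X d ω) P
  rw [hvarL]
  rw [Finset.mul_sum, Finset.mul_sum]
  refine Finset.sum_congr rfl fun d _ => ?_
  rw [hvarX d, hpe d]
  have hpd : p d ≠ 0 := by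
    have := (hphat d).1; rw [hpe d] at this; linarith
  field_simp
  ring
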